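/- Let G be a graph and v a vertex of G. Let T be the set of neighbors u of v for which there exists another neighbor w of v with w not adjacent to u in G (i.e., the neighbors of v incident to at least one edge added in forming G/v), and let t = |T|. If G/v and G − ({v} ∪ T) each have at least 2 vertices, then st_D(G/v) ≤ st_D(G − ({v} ∪ T)) + t. -/

import Mathlib

/-!
Every edge added in forming `G/v` has both ends in `T`, so for any `U ⊇ T` avoiding `v`,
deleting `U` from `G/v` leaves exactly `G - ({v} ∪ U)`. If `D(G/v) ≠ D(G - ({v} ∪ T))`,
deleting `T` from `G/v` already changes its distinguishing number. Otherwise take a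
minimum set `S` realising `st_D(G - ({v} ∪ T))` and delete `T ∪ S` from `G/v`: what remains
is `(G - ({v} ∪ T)) - S`, whose distinguishing number differs from
`D(G - ({v} ∪ T)) = D(G/v)`.
-/

open SimpleGraph

/-- The distinguishing number of a graph: the least `d` such that there is a vertex
labeling with `d` labels preserved only by the trivial automorphism. -/
noncomputable def distNum {V : Type*} (G : SimpleGraph V) : ℕ :=
  sInf {d : ℕ | ∃ f : V → Fin d, ∀ φ : G ≃g G, (∀ x, f (φ x) = f x) → ∀ x, φ x = x}

/-- The distinguishing stability of a graph: the minimum cardinality of a proper subset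
`S` of the vertex set whose removal changes the distinguishing number. -/
noncomputable def stD {V : Type*} (G : SimpleGraph V) : ℕ :=
  sInf {k : ℕ | ∃ S : Set V, S ≠ Set.univ ∧ S.ncard = k ∧
    distNum (G.induce Sᶜ) ≠ distNum G}

/-- The distinguishing bondage number of a graph: the minimum cardinality of a set
of edges whose removal changes the distinguishing number. -/
noncomputable def bD {V : Type*} (G : SimpleGraph V) : ℕ :=
  sInf {k : ℕ | ∃ F : Set (Sym2 V), F ⊆ G.edgeSet ∧ F.ncard = k ∧
    distNum (G.deleteEdges F) ≠ distNum G}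

/-- The contraction $G/v$: delete $v$ and put a clique on its open neighborhood. -/
def vertexContraction {V : Type*} (G : SimpleGraph V) (v : V) :
    SimpleGraph {x : V // x ≠ v} :=
  SimpleGraph.fromRel (fun x y => G.Adj (x : V) (y : V) ∨ (G.Adj (x : V) v ∧ G.Adj (y : V) v))

open Set

namespace SimpleGraph

variable {V W : Type*}

def IsDistinguishing (G : SimpleGraph V) {d : ℕ} (f : V → Fin d) : Prop :=
  ∀ φ : G ≃g G, (∀ x, f (φ x) = f x) → ∀ x, φ x = x

theorem IsDistinguishing.comp_iso_symm {G : SimpleGraph V} {H : SimpleGraph W} {d : ℕ}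
    {f : V → Fin d} (hf : G.IsDistinguishing f) (e : G ≃g H) :
    H.IsDistinguishing (f ∘ e.symm) := by
  intro φ hφ x
  have hfix : ∀ y, (e.trans (φ.trans e.symm)) y = y :=
    hf _ fun y => by simpa using hφ (e y)
  simpa using congrArg e (hfix (e.symm x))

theorem Iso.exists_isDistinguishing_iff {G : SimpleGraph V} {H : SimpleGraph W} (e : G ≃g H)
    {d : ℕ} : (∃ f : V → Fin d, G.IsDistinguishing f) ↔ ∃ f : W → Fin d, H.IsDistinguishing f :=
  ⟨fun ⟨_, hf⟩ => ⟨_, hf.comp_iso_symm e⟩, fun ⟨_, hf⟩ => ⟨_, hf.comp_iso_symm e.symm⟩⟩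

theorem Iso.distNum_eq {G : SimpleGraph V} {H : SimpleGraph W} (e : G ≃g H) :
    distNum G = distNum H :=
  congrArg sInf (Set.ext fun _ => e.exists_isDistinguishing_iff)

theorem distNum_eq_one [Nonempty V] [Subsingleton V] (G : SimpleGraph V) : distNum G = 1 := by
  have h1 : ∃ f : V → Fin 1, G.IsDistinguishing f :=
    ⟨fun _ => 0, fun _ _ _ => Subsingleton.elim _ _⟩
  refine le_antisymm (Nat.sInf_le h1) (Nat.one_le_iff_ne_zero.2 fun h0 => ?_)
  rcases Nat.sInf_eq_zero.1 h0 with ⟨f, -⟩ | hempty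
  · exact (f (Classical.arbitrary V)).elim0
  · exact hempty.subset h1

/-- `distNum G = 1` forces `1` into the (then nonempty) set of admissible label counts, and a
single label is preserved by every automorphism. -/
theorem distNum_ne_one_of_apply_ne {G : SimpleGraph V} (φ : G ≃g G) {x : V} (hx : φ x ≠ x) :
    distNum G ≠ 1 := by
  intro h
  change sInf {d : ℕ | ∃ f : V → Fin d, G.IsDistinguishing f} = 1 at h
  have hmem := Nat.sInf_mem (Nat.nonempty_of_pos_sInf (h ▸ Nat.one_pos))
  rw [h] at hmem
  obtain ⟨f, hf⟩ := hmem
  exact hx (hf φ (fun _ => Subsingleton.elim _ _) x)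

def swapIso [DecidableEq V] (G : SimpleGraph V) {a b : V} (hab : ∀ x, x = a ∨ x = b) :
    G ≃g G where
  toEquiv := Equiv.swap a b
  map_rel_iff' {x y} := by
    rcases hab x with rfl | rfl <;> rcases hab y with rfl | rfl <;>
      simp [Equiv.swap_apply_left, Equiv.swap_apply_right, G.adj_comm]

theorem exists_distNum_induce_compl_ne [Nontrivial V] (G : SimpleGraph V) :
    ∃ S : Set V, S ≠ univ ∧ distNum (G.induce Sᶜ) ≠ distNum G := by
  classical
  obtain ⟨a, b, hab⟩ := exists_pair_ne V
  by_cases h1 : distNum G = 1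
  · refine ⟨{a, b}ᶜ, fun h => (h ▸ mem_univ a) (by simp), ?_⟩
    rw [compl_compl, h1]
    have hpair : ∀ x : ({a, b} : Set V), x = ⟨a, by simp⟩ ∨ x = ⟨b, by simp⟩ := by
      rintro ⟨x, rfl | rfl⟩ <;> simp
    exact distNum_ne_one_of_apply_ne (swapIso _ hpair)
      (x := ⟨a, by simp⟩) (by simp [Equiv.swap_apply_left, swapIso, hab.symm])
  · refine ⟨{a}ᶜ, fun h => (h ▸ mem_univ a) rfl, ?_⟩
    rw [compl_compl, distNum_eq_one]
    exact Ne.symm h1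

theorem exists_ncard_eq_stD [Nontrivial V] (G : SimpleGraph V) :
    ∃ S : Set V, S ≠ univ ∧ S.ncard = stD G ∧ distNum (G.induce Sᶜ) ≠ distNum G := by
  obtain ⟨S, hS, hne⟩ := G.exists_distNum_induce_compl_ne
  exact Nat.sInf_mem (s := {k | ∃ S : Set V, S ≠ univ ∧ S.ncard = k ∧
    distNum (G.induce Sᶜ) ≠ distNum G}) ⟨S.ncard, S, hS, rfl, hne⟩

theorem stD_le_ncard {G : SimpleGraph V} {S : Set V} (hS : S ≠ univ)
    (hne : distNum (G.induce Sᶜ) ≠ distNum G) : stD G ≤ S.ncard :=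
  Nat.sInf_le ⟨S, hS, rfl, hne⟩

noncomputable def Iso.induceImage {G : SimpleGraph V} {H : SimpleGraph W} (f : W ↪ V)
    (s : Set W) (hadj : ∀ x ∈ s, ∀ y ∈ s, G.Adj (f x) (f y) ↔ H.Adj x y) :
    H.induce s ≃g G.induce (f '' s) where
  toEquiv := Equiv.Set.image f s f.injective
  map_rel_iff' {x y} := hadj x x.2 y y.2

theorem distNum_induce_induce (G : SimpleGraph V) (s : Set V) (S : Set s) :
    distNum ((G.induce s).induce S) = distNum (G.induce (Subtype.val '' S)) :=
  (Iso.induceImage (Function.Embedding.subtype _) S fun _ _ _ _ => Iff.rfl).distNum_eq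

def contractionNewEdgeEnds (G : SimpleGraph V) (v : V) : Set V :=
  {u | G.Adj v u ∧ ∃ w, G.Adj v w ∧ w ≠ u ∧ ¬ G.Adj w u}

theorem vertexContraction_adj_iff {G : SimpleGraph V} {v : V} {x y : {x // x ≠ v}}
    (hx : x.1 ∉ G.contractionNewEdgeEnds v) :
    (vertexContraction G v).Adj x y ↔ G.Adj x y := by
  have added : G.Adj x v → G.Adj y v → x ≠ y → G.Adj x y := fun hxv hyv hne => by
    by_contra hxy
    exact hx ⟨hxv.symm, y, hyv.symm, fun h => hne (Subtype.ext h.symm), fun h => hxy h.symm⟩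
  rw [vertexContraction, fromRel_adj]
  constructor
  · rintro ⟨hne, (h | ⟨hxv, hyv⟩) | (h | ⟨hyv, hxv⟩)⟩
    exacts [h, added hxv hyv hne, h.symm, added hxv hyv hne]
  · exact fun h => ⟨fun he => h.ne (congrArg Subtype.val he), Or.inl (Or.inl h)⟩

theorem distNum_vertexContraction_induce {G : SimpleGraph V} {v : V} {U : Set V}
    (hU : G.contractionNewEdgeEnds v ⊆ U) :
    distNum ((vertexContraction G v).induce (Subtype.val ⁻¹' U)ᶜ) =
      distNum (G.induce (insert v U)ᶜ) := by
  have himage : Subtype.val '' (Subtype.val ⁻¹' U : Set {x // x ≠ v})ᶜ = (insert v U)ᶜ := by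
    ext x
    simp [and_comm]
  rw [← himage]
  refine (Iso.induceImage (Function.Embedding.subtype _) _ fun x hx _ _ => ?_).distNum_eq
  exact (vertexContraction_adj_iff fun h => (show x.1 ∉ U from hx) (hU h)).symm

theorem stD_vertexContraction_le_ncard {G : SimpleGraph V} {v : V} {U : Set V}
    (hU : G.contractionNewEdgeEnds v ⊆ U) (hvU : v ∉ U) (hrest : (insert v U)ᶜ.Nonempty)
    (hne : distNum (G.induce (insert v U)ᶜ) ≠ distNum (vertexContraction G v)) :
    stD (vertexContraction G v) ≤ U.ncard := by
  obtain ⟨x, hx⟩ := hrest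
  rw [mem_compl_iff, mem_insert_iff, not_or] at hx
  have hS : (Subtype.val ⁻¹' U : Set {x // x ≠ v}) ≠ univ :=
    ne_univ_iff_exists_notMem _ |>.2 ⟨⟨x, hx.1⟩, hx.2⟩
  refine (stD_le_ncard hS ?_).trans_eq <|
    ncard_preimage_of_injective_subset_range Subtype.val_injective ?_
  · rwa [distNum_vertexContraction_induce hU]
  · rintro u hu
    exact ⟨⟨u, by rintro rfl; exact hvU hu⟩, rfl⟩

end SimpleGraph

theorem stD_vertexContraction_general {V : Type*} (G : SimpleGraph V) (v : V)
    (T : Set V)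
    (hT : T = {u : V | G.Adj v u ∧ ∃ w : V, G.Adj v w ∧ w ≠ u ∧ ¬ G.Adj w u})
    (h2 : 2 ≤ Nat.card ((insert v T : Set V)ᶜ : Set V)) :
    stD (vertexContraction G v) ≤ stD (G.induce (insert v T : Set V)ᶜ) + T.ncard := by
  replace hT : T = G.contractionNewEdgeEnds v := hT
  set C : Set V := insert v T
  have hvT : v ∉ T := by
    rw [hT]
    exact fun h => G.irrefl h.1
  have : Finite ↥Cᶜ := Nat.finite_of_card_ne_zero (by omega)
  have : Nontrivial ↥Cᶜ := Finite.one_lt_card_iff_nontrivial.1 (by omega)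
  by_cases hEq : distNum (vertexContraction G v) = distNum (G.induce Cᶜ)
  · obtain ⟨S, hSu, hScard, hSne⟩ := (G.induce Cᶜ).exists_ncard_eq_stD
    have hrest : (insert v (T ∪ Subtype.val '' S))ᶜ = Subtype.val '' Sᶜ := by
      rw [Set.image_val_compl, ← insert_union, compl_union, sdiff_eq]
    calc stD (vertexContraction G v) ≤ (T ∪ Subtype.val '' S).ncard := by
          refine stD_vertexContraction_le_ncard (hT.symm.subset.trans subset_union_left) ?_ ?_ ?_
          · rintro (h | ⟨x, -, hx⟩)
            exacts [hvT h, x.2 (hx ▸ mem_insert v T)]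
          · rw [hrest]
            exact (nonempty_compl.2 hSu).image _
          · rwa [hrest, hEq, ← distNum_induce_induce]
      _ ≤ T.ncard + (Subtype.val '' S).ncard := ncard_union_le _ _
      _ = stD (G.induce Cᶜ) + T.ncard := by
          rw [ncard_image_of_injective _ Subtype.val_injective, hScard, add_comm]
  · calc stD (vertexContraction G v) ≤ T.ncard :=
          stD_vertexContraction_le_ncard hT.symm.subset hvT
            (nonempty_coe_sort.1 inferInstance) (Ne.symm hEq)
      _ ≤ _ := Nat.le_add_left _ _

/-- $st_D(G/v) \le st_D(G - (\{v\} \cup T)) + |T|$ where $T$ is the set of neighbours of $v$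
incident to an edge added in forming $G/v$. -/
theorem stD_vertexContraction {V : Type*} [Fintype V] (G : SimpleGraph V) (v : V)
    (T : Set V)
    (hT : T = {u : V | G.Adj v u ∧ ∃ w : V, G.Adj v w ∧ w ≠ u ∧ ¬ G.Adj w u})
    (h1 : 2 ≤ Nat.card {x : V // x ≠ v})
    (h2 : 2 ≤ Nat.card ((insert v T : Set V)ᶜ : Set V)) :
    stD (vertexContraction G v) ≤ stD (G.induce (insert v T : Set V)ᶜ) + T.ncard :=
  stD_vertexContraction_general G v T hT h2
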